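/- For α > 2, θ > 0, and h > 0, the coverage probability for strongest BS association with elevated base stations satisfies P_cov^S(θ,λ) = 2πλ·∫_h^∞ exp(-πλh²·ψ(θ·h^(-α)·r^α))·r dr, and P_cov^S(θ,λ) < exp(-πλh²·ψ(θ))/ψ(θ) for all λ > 0; consequently lim_{λ→∞} P_cov^S(θ,λ) = 0. -/

import Mathlib

open Real MeasureTheory Set Filter Topology

/-- Gauss hypergeometric function `₂F₁(a,b;c;z)` via Euler's integral representation. -/
noncomputable def hyp2F1 (a b c z : ℝ) : ℝ :=
  (Real.Gamma c / (Real.Gamma b * Real.Gamma (c - b))) *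
    ∫ t in Ioo (0 : ℝ) 1, t ^ (b - 1) * (1 - t) ^ (c - b - 1) * (1 - z * t) ^ (-a)

noncomputable def psi (α z : ℝ) : ℝ :=
  (2 * z / (α - 2)) * hyp2F1 1 (1 - 2 / α) (2 - 2 / α) (-z)

/-!
By Euler's integral, `ψ(z) = (2/α) z^{2/α} Φ(z)` with `Φ(z) = ∫₀^z u^{-2/α} / (1 + u) du`
increasing. For `r > h` the argument `z = θ (r/h)^α` exceeds `θ`, so
`h² ψ(z) = (2/α) θ^{2/α} r² Φ(z) > r² ψ(θ)`: the integrand is strictly dominated by the Gaussian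
`r exp(-πλψ(θ) r²)`, whose integral over `(h, ∞)` is `exp(-πλh²ψ(θ)) / (2πλψ(θ))`.
-/

theorem setIntegral_lt_setIntegral_of_forall_lt {α : Type*} [MeasurableSpace α] {μ : Measure α}
    {s : Set α} {f g : α → ℝ} (hs : MeasurableSet s) (hμs : μ s ≠ 0)
    (hf : IntegrableOn f s μ) (hg : IntegrableOn g s μ) (hlt : ∀ x ∈ s, f x < g x) :
    ∫ x in s, f x ∂μ < ∫ x in s, g x ∂μ := by
  rw [← sub_pos, ← integral_sub hg hf, setIntegral_pos_iff_support_of_nonneg_ae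
    (ae_restrict_of_forall_mem hs fun x hx => (sub_pos.2 (hlt x hx)).le) (hg.sub hf)]
  have hsupp : s ⊆ Function.support fun x => g x - f x := fun x hx => (sub_pos.2 (hlt x hx)).ne'
  rwa [inter_eq_right.2 hsupp, pos_iff_ne_zero]

theorem integral_Ioi_mul_exp_neg_mul_sq {b : ℝ} (hb : 0 < b) (a : ℝ) :
    ∫ x in Ioi a, x * exp (-b * x ^ 2) = exp (-b * a ^ 2) / (2 * b) := by
  have hderiv : ∀ x ∈ Ici a,
      HasDerivAt (fun x => -exp (-b * x ^ 2) / (2 * b)) (x * exp (-b * x ^ 2)) x := by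
    intro x _
    refine (((hasDerivAt_pow 2 x).const_mul (-b)).exp.neg.div_const (2 * b)).congr_deriv ?_
    field_simp
    ring
  have hlim : Tendsto (fun x => -exp (-b * x ^ 2) / (2 * b)) atTop (𝓝 0) := by
    have : Tendsto (fun x : ℝ => -b * x ^ 2) atTop atBot :=
      (tendsto_pow_atTop two_ne_zero).const_mul_atTop_of_neg (neg_neg_of_pos hb)
    simpa using (tendsto_exp_atBot.comp this).neg.div_const (2 * b)
  rw [integral_Ioi_of_hasDerivAt_of_tendsto' hderiv
    (integrable_mul_exp_neg_mul_sq hb).integrableOn hlim]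
  ring

theorem intervalIntegrable_rpow_mul_inv_one_add {s a b : ℝ} (hs : -1 < s) (ha : 0 ≤ a)
    (hb : 0 ≤ b) : IntervalIntegrable (fun u : ℝ => u ^ s * (1 + u)⁻¹) volume a b := by
  refine (intervalIntegral.intervalIntegrable_rpow' hs).mono_fun
    (Measurable.aestronglyMeasurable (by fun_prop)) ?_
  refine ae_restrict_of_forall_mem measurableSet_uIoc fun u hu => ?_
  have hu : 0 < u := (le_min ha hb).trans_lt hu.1
  dsimp only
  rw [norm_mul, norm_inv, Real.norm_of_nonneg (by positivity : (0 : ℝ) ≤ 1 + u)]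
  exact mul_le_of_le_one_right (norm_nonneg _) (inv_le_one_of_one_le₀ (by linarith))

noncomputable def integralRpowDivOneAdd (s z : ℝ) : ℝ :=
  ∫ u in (0 : ℝ)..z, u ^ s * (1 + u)⁻¹

theorem strictMonoOn_integralRpowDivOneAdd {s : ℝ} (hs : -1 < s) :
    StrictMonoOn (integralRpowDivOneAdd s) (Ici 0) := by
  intro z hz w hw hzw
  rw [integralRpowDivOneAdd, integralRpowDivOneAdd, ← sub_pos,
    intervalIntegral.integral_interval_sub_left
      (intervalIntegrable_rpow_mul_inv_one_add hs le_rfl hw)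
      (intervalIntegrable_rpow_mul_inv_one_add hs le_rfl hz)]
  refine intervalIntegral.intervalIntegral_pos_of_pos_on
    (intervalIntegrable_rpow_mul_inv_one_add hs hz hw) (fun u hu => ?_) hzw
  have hu : 0 < u := lt_of_le_of_lt hz hu.1
  positivity

theorem integral_rpow_mul_inv_one_add_mul {s z : ℝ} (hz : 0 < z) :
    ∫ t in (0 : ℝ)..1, t ^ s * (1 + z * t)⁻¹ = z ^ (-s) * z⁻¹ * integralRpowDivOneAdd s z := by
  have hsub := intervalIntegral.integral_comp_mul_left
    (a := 0) (b := 1) (fun u : ℝ => u ^ s * (1 + u)⁻¹) hz.ne'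
  simp only [mul_zero, mul_one, smul_eq_mul] at hsub
  have hfactor : ∫ t in (0 : ℝ)..1, (z * t) ^ s * (1 + z * t)⁻¹
      = z ^ s * ∫ t in (0 : ℝ)..1, t ^ s * (1 + z * t)⁻¹ := by
    rw [← intervalIntegral.integral_const_mul]
    refine intervalIntegral.integral_congr fun t ht => ?_
    rw [uIcc_of_le zero_le_one] at ht
    rw [Real.mul_rpow hz.le ht.1, mul_assoc]
  rw [integralRpowDivOneAdd, mul_assoc, ← hsub, hfactor, ← mul_assoc,
    ← Real.rpow_add hz, neg_add_cancel, Real.rpow_zero, one_mul]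

theorem neg_one_lt_neg_two_div {α : ℝ} (hα : 2 < α) : -1 < -(2 / α) := by
  rw [neg_lt_neg_iff, div_lt_one (by linarith)]
  exact hα

theorem hyp2F1_one_self_add_one {b : ℝ} (hb : 0 < b) (z : ℝ) :
    hyp2F1 1 b (b + 1) (-z) = b * ∫ t in (0 : ℝ)..1, t ^ (b - 1) * (1 + z * t)⁻¹ := by
  rw [hyp2F1, add_sub_cancel_left, sub_self, Real.Gamma_one, Real.Gamma_add_one hb.ne',
    mul_one, mul_div_cancel_right₀ _ (Real.Gamma_pos_of_pos hb).ne',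
    intervalIntegral.integral_of_le zero_le_one, integral_Ioc_eq_integral_Ioo]
  congr 1
  refine setIntegral_congr_fun measurableSet_Ioo fun t _ => ?_
  rw [Real.rpow_zero, mul_one, Real.rpow_neg_one, neg_mul, sub_neg_eq_add]

theorem psi_eq_rpow_mul_integralRpowDivOneAdd {α z : ℝ} (hα : 2 < α) (hz : 0 < z) :
    psi α z = 2 / α * z ^ (2 / α) * integralRpowDivOneAdd (-(2 / α)) z := by
  have hb : 0 < 1 - 2 / α := by linarith [neg_one_lt_neg_two_div hα]
  rw [psi, show (2 : ℝ) - 2 / α = 1 - 2 / α + 1 by ring, hyp2F1_one_self_add_one hb,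
    show 1 - 2 / α - 1 = -(2 / α) by ring, integral_rpow_mul_inv_one_add_mul hz, neg_neg]
  field_simp [hz.ne', (sub_pos.2 hα).ne']

theorem psi_pos {α z : ℝ} (hα : 2 < α) (hz : 0 < z) : 0 < psi α z := by
  have hΦ : 0 < integralRpowDivOneAdd (-(2 / α)) z := by
    simpa [integralRpowDivOneAdd] using strictMonoOn_integralRpowDivOneAdd
      (neg_one_lt_neg_two_div hα) self_mem_Ici hz.le hz
  rw [psi_eq_rpow_mul_integralRpowDivOneAdd hα hz]
  have : 0 < α := by linarith
  positivity

theorem measurable_psi (α : ℝ) : Measurable (psi α) := by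
  unfold psi hyp2F1
  refine Measurable.mul (by fun_prop) (Measurable.mul measurable_const ?_)
  have hF : StronglyMeasurable fun p : ℝ × ℝ =>
      p.2 ^ ((1 - 2 / α) - 1) * (1 - p.2) ^ (2 - 2 / α - (1 - 2 / α) - 1) *
        (1 - (-p.1) * p.2) ^ (-(1 : ℝ)) :=
    Measurable.stronglyMeasurable (by fun_prop)
  exact (hF.integral_prod_right' (ν := volume.restrict (Ioo (0 : ℝ) 1))).measurable

theorem sq_mul_psi_lt_sq_mul_psi {α θ h r : ℝ} (hα : 2 < α) (hθ : 0 < θ) (hh : 0 < h)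
    (hr : h < r) : r ^ 2 * psi α θ < h ^ 2 * psi α (θ * h ^ (-α) * r ^ α) := by
  have hα0 : 0 < α := by linarith
  have hr0 : 0 < r := hh.trans hr
  have hz : θ * h ^ (-α) * r ^ α = θ * (r / h) ^ α := by
    rw [Real.div_rpow hr0.le hh.le, Real.rpow_neg hh.le]; ring
  have hθz : θ < θ * (r / h) ^ α :=
    lt_mul_of_one_lt_right hθ (Real.one_lt_rpow ((one_lt_div hh).2 hr) hα0)
  have hzpow : (θ * (r / h) ^ α) ^ (2 / α) = θ ^ (2 / α) * (r / h) ^ 2 := by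
    rw [Real.mul_rpow hθ.le (by positivity), ← Real.rpow_mul (by positivity),
      mul_div_cancel₀ _ hα0.ne', Real.rpow_two]
  have hΦ := strictMonoOn_integralRpowDivOneAdd (neg_one_lt_neg_two_div hα) hθ.le
    (hθ.trans hθz).le hθz
  rw [hz, psi_eq_rpow_mul_integralRpowDivOneAdd hα hθ,
    psi_eq_rpow_mul_integralRpowDivOneAdd hα (hθ.trans hθz), hzpow]
  have hc : 0 < 2 / α * θ ^ (2 / α) * r ^ 2 := by positivity
  calc r ^ 2 * (2 / α * θ ^ (2 / α) * integralRpowDivOneAdd (-(2 / α)) θ)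
      < 2 / α * θ ^ (2 / α) * r ^ 2 * integralRpowDivOneAdd (-(2 / α)) (θ * (r / h) ^ α) := by
        rw [mul_comm, mul_assoc, mul_comm (integralRpowDivOneAdd _ θ), ← mul_assoc]
        exact mul_lt_mul_of_pos_left hΦ hc
    _ = _ := by field_simp

noncomputable def coverageProbStrongest (α θ h lam : ℝ) : ℝ :=
  2 * π * lam *
    ∫ r in Ioi h, Real.exp (-(π * lam * h ^ 2 * psi α (θ * h ^ (-α) * r ^ α))) * r

theorem coverageProbStrongest_nonneg (α θ h : ℝ) (hh : 0 < h) {lam : ℝ} (hlam : 0 ≤ lam) :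
    0 ≤ coverageProbStrongest α θ h lam := by
  refine mul_nonneg (by positivity) (setIntegral_nonneg measurableSet_Ioi fun r hr => ?_)
  have : 0 < r := hh.trans hr
  positivity

theorem coverageProbStrongest_lt {α θ h lam : ℝ} (hα : 2 < α) (hθ : 0 < θ) (hh : 0 < h)
    (hlam : 0 < lam) :
    coverageProbStrongest α θ h lam < Real.exp (-(π * lam * h ^ 2 * psi α θ)) / psi α θ := by
  have hψ := psi_pos hα hθ
  set b := π * lam * psi α θ with hb_def
  have hb : 0 < b := by positivity
  have hlt : ∀ r ∈ Ioi h, Real.exp (-(π * lam * h ^ 2 * psi α (θ * h ^ (-α) * r ^ α))) * r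
      < r * Real.exp (-b * r ^ 2) := by
    intro r hr
    have hr0 : 0 < r := hh.trans hr
    rw [mul_comm]
    refine mul_lt_mul_of_pos_left (Real.exp_lt_exp.2 ?_) hr0
    have := mul_lt_mul_of_pos_left (sq_mul_psi_lt_sq_mul_psi hα hθ hh hr)
      (by positivity : 0 < π * lam)
    linarith
  have hg : IntegrableOn (fun r => r * Real.exp (-b * r ^ 2)) (Ioi h) :=
    (integrable_mul_exp_neg_mul_sq hb).integrableOn
  have hf : IntegrableOn
      (fun r => Real.exp (-(π * lam * h ^ 2 * psi α (θ * h ^ (-α) * r ^ α))) * r) (Ioi h) := by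
    refine hg.mono' (Measurable.aestronglyMeasurable ?_)
      (ae_restrict_of_forall_mem measurableSet_Ioi fun r hr => ?_)
    · exact (measurable_exp.comp (((measurable_psi α).comp (by fun_prop)).const_mul _).neg).mul
        measurable_id
    · have : 0 < r := hh.trans hr
      rw [Real.norm_of_nonneg (by positivity)]
      exact (hlt r hr).le
  calc coverageProbStrongest α θ h lam
      < 2 * π * lam * ∫ r in Ioi h, r * Real.exp (-b * r ^ 2) :=
        mul_lt_mul_of_pos_left (setIntegral_lt_setIntegral_of_forall_lt measurableSet_Ioi
          (by simp) hf hg hlt) (by positivity)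
    _ = Real.exp (-(π * lam * h ^ 2 * psi α θ)) / psi α θ := by
        rw [integral_Ioi_mul_exp_neg_mul_sq hb, hb_def]
        field_simp

theorem tendsto_coverageProbStrongest_atTop {α θ h : ℝ} (hα : 2 < α) (hθ : 0 < θ)
    (hh : 0 < h) : Tendsto (coverageProbStrongest α θ h) atTop (𝓝 0) := by
  have hψ := psi_pos hα hθ
  have hbound : Tendsto (fun lam => Real.exp (-(π * lam * h ^ 2 * psi α θ)) / psi α θ)
      atTop (𝓝 0) := by
    have : Tendsto (fun lam => -(π * lam * h ^ 2 * psi α θ)) atTop atBot := by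
      simp_rw [show ∀ lam, -(π * lam * h ^ 2 * psi α θ) = -(π * h ^ 2 * psi α θ) * lam by
        intro; ring]
      exact tendsto_id.const_mul_atTop_of_neg (by simp only [neg_neg_iff_pos]; positivity)
    simpa using (tendsto_exp_atBot.comp this).div_const (psi α θ)
  refine tendsto_of_tendsto_of_tendsto_of_le_of_le' tendsto_const_nhds hbound ?_ ?_
  · filter_upwards [eventually_ge_atTop 0] with lam hlam
    exact coverageProbStrongest_nonneg α θ h hh hlam
  · filter_upwards [eventually_gt_atTop 0] with lam hlam
    exact (coverageProbStrongest_lt hα hθ hh hlam).le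

theorem coverage_strongest_bound_and_limit (α θ h : ℝ)
    (hα : 2 < α) (hθ : 0 < θ) (hh : 0 < h) :
    let PcovS : ℝ → ℝ := fun lam =>
      2 * π * lam *
        ∫ r in Ioi h, Real.exp (-(π * lam * h ^ 2 * psi α (θ * h ^ (-α) * r ^ α))) * r
    (∀ lam : ℝ, 0 < lam →
        PcovS lam < Real.exp (-(π * lam * h ^ 2 * psi α θ)) / psi α θ) ∧
      Tendsto PcovS atTop (nhds 0) :=
  ⟨fun _ hlam => coverageProbStrongest_lt hα hθ hh hlam,
    tendsto_coverageProbStrongest_atTop hα hθ hh⟩
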